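/- Asymptotic convergence of the ADMM inner iterations (Corollary 1, convergence part): Assume g is convex, X̄ is convex, β > 0, ρ = 2β, f is bounded below on X, and g is bounded below on X̄. Let (x_r, x̄_r, z_r, y_r), r = 0, 1, 2, …, be a sequence with x_r ∈ X, x̄_r ∈ X̄, λ + βz_0 + y_0 = 0, and such that each (x_{r+1}, x̄_{r+1}, z_{r+1}, y_{r+1}) is produced from (x_r, x̄_r, z_r, y_r) by one ADMM inner iteration. Then, as r → ∞, Bx̄_{r+1} − Bx̄_r → 0, z_{r+1} − z_r → 0, and Ax_r + Bx̄_r + z_r → 0. -/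

import Mathlib

/-
The augmented Lagrangian `L r = L(x r, x̄ r, z r; y r)` is a Lyapunov function. The `x`-step does
not increase it; the `x̄`-step decreases it by at least `ρ/2 ‖B Δx̄‖²`, since the `x̄`-subproblem is
convex plus a quadratic in `B x̄`; the `z`-step decreases it by exactly `(ρ + β)/2 ‖Δz‖²`, since
`z⁺` minimizes a quadratic of curvature `ρ + β`; the dual step increases it by `ρ ‖r⁺‖²`, where
`r = A x + B x̄ + z`. The `z`-update makes `λ + β z + y = 0` invariant, so `ρ r⁺ = -β Δz`, and for
`ρ = 2β` the net decrease is `β (‖B Δx̄‖² + ‖Δz‖²)`. The invariant also bounds `L` below by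
`inf f + inf g - ‖λ‖² / (2β)`, so the decreases tend to zero, and with them `r⁺ = -Δz / 2`.
-/

open scoped RealInnerProductSpace

variable {E F P : Type*}
  [NormedAddCommGroup E] [InnerProductSpace ℝ E] [FiniteDimensional ℝ E]
  [NormedAddCommGroup F] [InnerProductSpace ℝ F] [FiniteDimensional ℝ F]
  [NormedAddCommGroup P] [InnerProductSpace ℝ P] [FiniteDimensional ℝ P]

/-- One ADMM inner iteration mapping `(x, x̄, z, y)` to `(x⁺, x̄⁺, z⁺, y⁺)`:
`x⁺` minimizes `x′ ↦ f(x′) + (ρ/2)‖Ax′ + Bx̄ + z + y/ρ‖²` over `X`;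
`x̄⁺` minimizes `x̄′ ↦ g(x̄′) + (ρ/2)‖Ax⁺ + Bx̄′ + z + y/ρ‖²` over `X̄`;
`z⁺ = −(ρ/(ρ+β))(Ax⁺ + Bx̄⁺ + y/ρ) − λ/(ρ+β)`; `y⁺ = y + ρ(Ax⁺ + Bx̄⁺ + z⁺)`. -/
def ADMMStep (A : E →L[ℝ] P) (B : F →L[ℝ] P) (f : E → ℝ) (g : F → ℝ)
    (X : Set E) (Xb : Set F) (lam : P) (ρ β : ℝ)
    (xb : F) (z y : P) (xp : E) (xbp : F) (zp yp : P) : Prop :=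
  xp ∈ X ∧
  IsMinOn (fun x' : E => f x' + ρ / 2 * ‖A x' + B xb + z + ρ⁻¹ • y‖ ^ 2) X xp ∧
  xbp ∈ Xb ∧
  IsMinOn (fun xb' : F => g xb' + ρ / 2 * ‖A xp + B xb' + z + ρ⁻¹ • y‖ ^ 2) Xb xbp ∧
  zp = -((ρ / (ρ + β)) • (A xp + B xbp + ρ⁻¹ • y)) - (ρ + β)⁻¹ • lam ∧
  yp = y + ρ • (A xp + B xbp + zp)

open Filter Topology

theorem tendsto_nhds_zero_of_add_mul_sq_norm_le {V : Type*} [SeminormedAddCommGroup V]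
    {L : ℕ → ℝ} {v : ℕ → V} {c : ℝ} (hc : 0 < c) (hL : BddBelow (Set.range L))
    (h : ∀ r, L (r + 1) + c * ‖v r‖ ^ 2 ≤ L r) :
    Tendsto v atTop (𝓝 0) := by
  have hlim := tendsto_atTop_ciInf (antitone_nat_of_succ_le fun r => by
    linarith [h r, mul_nonneg hc.le (sq_nonneg ‖v r‖)]) hL
  have hdiff : Tendsto (fun r => c⁻¹ * (L r - L (r + 1))) atTop (𝓝 0) := by
    simpa using (hlim.sub (hlim.comp (tendsto_add_atTop_nat 1))).const_mul c⁻¹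
  have hsq : Tendsto (fun r => ‖v r‖ ^ 2) atTop (𝓝 0) :=
    squeeze_zero (fun r => by positivity)
      (fun r => by rw [le_inv_mul_iff₀ hc]; linarith [h r]) hdiff
  rw [tendsto_zero_iff_norm_tendsto_zero]
  simpa [Real.sqrt_sq (norm_nonneg _)] using hsq.sqrt

section

variable {E F P : Type*}
  [NormedAddCommGroup E] [InnerProductSpace ℝ E]
  [NormedAddCommGroup F] [InnerProductSpace ℝ F]
  [NormedAddCommGroup P] [InnerProductSpace ℝ P]

theorem ConvexOn.isMinOn_of_isMinOn_add_mul_sq_norm {C : Set F} {h : F → ℝ}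
    (hh : ConvexOn ℝ C h) (B : F →L[ℝ] P) (c : ℝ) {xs : F} (hxs : xs ∈ C)
    (hmin : IsMinOn (fun u => h u + c * ‖B (u - xs)‖ ^ 2) C xs) : IsMinOn h C xs := by
  refine isMinOn_iff.2 fun u hu => ?_
  -- along the segment from `xs` to `u` the quadratic term is `O(t²)`, so it vanishes as `t → 0⁺`
  set K := c * ‖B (u - xs)‖ ^ 2
  have hle : ∀ t ∈ Set.Ioo (0 : ℝ) 1, h xs ≤ h u + t * K := by
    rintro t ⟨ht0, ht1⟩
    have hmin_t : h xs ≤ h (xs + t • (u - xs)) + t ^ 2 * K := by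
      have := isMinOn_iff.1 hmin _ (hh.1.add_smul_sub_mem hxs hu ⟨ht0.le, ht1.le⟩)
      simp only [sub_self, map_zero, norm_zero, add_sub_cancel_left, map_smul, norm_smul,
        Real.norm_eq_abs, mul_pow, sq_abs] at this
      linarith
    have hconv : h (xs + t • (u - xs)) ≤ (1 - t) * h xs + t * h u := by
      have := hh.2 hxs hu (sub_nonneg.2 ht1.le) ht0.le (by ring)
      rwa [show (1 - t) • xs + t • u = xs + t • (u - xs) by module] at this
    nlinarith
  have hlim : Tendsto (fun t : ℝ => h u + t * K) (𝓝[>] 0) (𝓝 (h u)) :=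
    ((by fun_prop : Continuous fun t : ℝ => h u + t * K).tendsto' 0 (h u) (by ring)).mono_left
      nhdsWithin_le_nhds
  exact ge_of_tendsto hlim (eventually_of_mem (Ioo_mem_nhdsGT one_pos) hle)

theorem ConvexOn.add_half_mul_sq_norm_sub_le_of_isMinOn {C : Set F} {g : F → ℝ}
    (hg : ConvexOn ℝ C g) (B : F →L[ℝ] P) (c : P) (ρ : ℝ) {xs u : F} (hxs : xs ∈ C)
    (hu : u ∈ C) (hmin : IsMinOn (fun v => g v + ρ / 2 * ‖B v + c‖ ^ 2) C xs) :
    g xs + ρ / 2 * ‖B xs + c‖ ^ 2 + ρ / 2 * ‖B u - B xs‖ ^ 2 ≤ g u + ρ / 2 * ‖B u + c‖ ^ 2 := by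
  set ℓ : F →L[ℝ] ℝ := ρ • (innerSL ℝ (B xs + c)).comp B
  have hℓ : ∀ v, ℓ v = ρ * ⟪B v, B xs + c⟫ := fun v => by
    simp [ℓ, real_inner_comm (B v), inner_add_right, mul_add]
  have hsplit : ∀ v, ‖B v + c‖ ^ 2
      = ‖B (v - xs)‖ ^ 2 + 2 * ⟪B (v - xs), B xs + c⟫ + ‖B xs + c‖ ^ 2 := fun v => by
    rw [← norm_add_sq_real, map_sub]; abel_nf
  -- removing the quadratic `ρ/2 ‖B (· - xs)‖²` leaves `g` plus an affine function
  set h : F → ℝ := fun v => g v + ℓ v + (ρ / 2 * ‖B xs + c‖ ^ 2 - ℓ xs)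
  have hφ : ∀ v, g v + ρ / 2 * ‖B v + c‖ ^ 2 = h v + ρ / 2 * ‖B (v - xs)‖ ^ 2 := fun v => by
    simp only [h]
    rw [hsplit v, hℓ, hℓ, map_sub, inner_sub_left]
    ring
  have hh : ConvexOn ℝ C h := (hg.add (ℓ.toLinearMap.convexOn hg.1)).add_const _
  have hmin_h :=
    hh.isMinOn_of_isMinOn_add_mul_sq_norm B (ρ / 2) hxs (by simpa only [hφ] using hmin)
  have := isMinOn_iff.1 hmin_h u hu
  rw [hφ, hφ, sub_self, map_zero, norm_zero, map_sub]
  linarith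

theorem half_mul_sq_norm_add_inv_smul {ρ : ℝ} (hρ : ρ ≠ 0) (w y : P) :
    ρ / 2 * ‖w + ρ⁻¹ • y‖ ^ 2 = ⟪y, w⟫ + ρ / 2 * ‖w‖ ^ 2 + (2 * ρ)⁻¹ * ‖y‖ ^ 2 := by
  rw [norm_add_sq_real, norm_smul, real_inner_smul_right, real_inner_comm, Real.norm_eq_abs,
    mul_pow, sq_abs]
  field_simp
  ring

theorem inner_add_half_mul_sq_norm_eq_of_smul_eq_neg {κ : ℝ} {a z z' : P} (h : κ • z' = -a) :
    ⟪a, z⟫ + κ / 2 * ‖z‖ ^ 2 = ⟪a, z'⟫ + κ / 2 * ‖z'‖ ^ 2 + κ / 2 * ‖z - z'‖ ^ 2 := by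
  obtain rfl : a = -(κ • z') := by rw [h, neg_neg]
  rw [norm_sub_sq_real, inner_neg_left, inner_neg_left, real_inner_smul_left,
    real_inner_smul_left, real_inner_self_eq_norm_sq, real_inner_comm z]
  ring

noncomputable def augLagrangian (A : E →L[ℝ] P) (B : F →L[ℝ] P) (f : E → ℝ) (g : F → ℝ)
    (lam : P) (ρ β : ℝ) (x : E) (xb : F) (z y : P) : ℝ :=
  f x + g xb + ⟪y, A x + B xb + z⟫ + ρ / 2 * ‖A x + B xb + z‖ ^ 2 + ⟪lam, z⟫ + β / 2 * ‖z‖ ^ 2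

variable {A : E →L[ℝ] P} {B : F →L[ℝ] P} {f : E → ℝ} {g : F → ℝ} {lam : P} {ρ β : ℝ}

theorem augLagrangian_eq_sq_norm_add_inv_smul (hρ : ρ ≠ 0) (x : E) (xb : F) (z y : P) :
    augLagrangian A B f g lam ρ β x xb z y
      = f x + g xb + ρ / 2 * ‖A x + B xb + z + ρ⁻¹ • y‖ ^ 2 - (2 * ρ)⁻¹ * ‖y‖ ^ 2
        + ⟪lam, z⟫ + β / 2 * ‖z‖ ^ 2 := by
  rw [augLagrangian, half_mul_sq_norm_add_inv_smul hρ]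
  ring

theorem augLagrangian_le_of_isMinOn_fst (hρ : ρ ≠ 0) {X : Set E} {x xp : E} {xb : F} {z y : P}
    (hmin : IsMinOn (fun x' => f x' + ρ / 2 * ‖A x' + B xb + z + ρ⁻¹ • y‖ ^ 2) X xp)
    (hx : x ∈ X) :
    augLagrangian A B f g lam ρ β xp xb z y ≤ augLagrangian A B f g lam ρ β x xb z y := by
  rw [augLagrangian_eq_sq_norm_add_inv_smul hρ, augLagrangian_eq_sq_norm_add_inv_smul hρ]
  linarith [isMinOn_iff.1 hmin x hx]

theorem augLagrangian_add_le_of_isMinOn_snd (hρ : ρ ≠ 0) {Xb : Set F} (hg : ConvexOn ℝ Xb g)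
    {x : E} {xb xbp : F} {z y : P}
    (hmin : IsMinOn (fun xb' => g xb' + ρ / 2 * ‖A x + B xb' + z + ρ⁻¹ • y‖ ^ 2) Xb xbp)
    (hxbp : xbp ∈ Xb) (hxb : xb ∈ Xb) :
    augLagrangian A B f g lam ρ β x xbp z y + ρ / 2 * ‖B xb - B xbp‖ ^ 2
      ≤ augLagrangian A B f g lam ρ β x xb z y := by
  have hshift : ∀ xb' : F, A x + B xb' + z + ρ⁻¹ • y = B xb' + (A x + z + ρ⁻¹ • y) :=
    fun _ => by abel
  simp only [hshift] at hmin
  have := hg.add_half_mul_sq_norm_sub_le_of_isMinOn B _ ρ hxbp hxb hmin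
  rw [augLagrangian_eq_sq_norm_add_inv_smul hρ, augLagrangian_eq_sq_norm_add_inv_smul hρ, hshift,
    hshift]
  linarith

theorem augLagrangian_eq_quadratic_z (x : E) (xb : F) (z y : P) :
    augLagrangian A B f g lam ρ β x xb z y
      = f x + g xb + ⟪y, A x + B xb⟫ + ρ / 2 * ‖A x + B xb‖ ^ 2
        + (⟪ρ • (A x + B xb) + y + lam, z⟫ + (ρ + β) / 2 * ‖z‖ ^ 2) := by
  rw [augLagrangian]
  generalize A x + B xb = w
  rw [inner_add_right, norm_add_sq_real, inner_add_left, inner_add_left, real_inner_smul_left]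
  ring

theorem augLagrangian_add_eq_of_smul_eq {x : E} {xb : F} {z zp y : P}
    (hzp : (ρ + β) • zp = -(ρ • (A x + B xb) + y + lam)) :
    augLagrangian A B f g lam ρ β x xb zp y + (ρ + β) / 2 * ‖z - zp‖ ^ 2
      = augLagrangian A B f g lam ρ β x xb z y := by
  rw [augLagrangian_eq_quadratic_z, augLagrangian_eq_quadratic_z,
    inner_add_half_mul_sq_norm_eq_of_smul_eq_neg (z := z) hzp]
  ring

theorem augLagrangian_dual_update (x : E) (xb : F) (z y : P) :
    augLagrangian A B f g lam ρ β x xb z (y + ρ • (A x + B xb + z))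
      = augLagrangian A B f g lam ρ β x xb z y + ρ * ‖A x + B xb + z‖ ^ 2 := by
  rw [augLagrangian, augLagrangian, inner_add_left, real_inner_smul_left,
    real_inner_self_eq_norm_sq]
  ring

theorem augLagrangian_ge_of_dual_eq (hβ : 0 < β) (hβρ : β ≤ ρ) {x : E} {xb : F} {z y : P}
    (hy : lam + β • z + y = 0) :
    f x + g xb - (2 * β)⁻¹ * ‖lam‖ ^ 2 ≤ augLagrangian A B f g lam ρ β x xb z y := by
  obtain rfl : y = -lam - β • z := by rw [← sub_eq_zero, ← hy]; abel
  rw [augLagrangian]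
  generalize A x + B xb = w
  have hexpand : ⟪-lam - β • z, w + z⟫ + ρ / 2 * ‖w + z‖ ^ 2 + ⟪lam, z⟫ + β / 2 * ‖z‖ ^ 2
      = -⟪lam, w⟫ + β / 2 * ‖w‖ ^ 2 + (ρ - β) / 2 * ‖w + z‖ ^ 2 := by
    rw [inner_sub_left, inner_neg_left, real_inner_smul_left, inner_add_right, inner_add_right,
      norm_add_sq_real, real_inner_self_eq_norm_sq, real_inner_comm z w]
    ring
  have hw : -(2 * β)⁻¹ * ‖lam‖ ^ 2 ≤ -⟪lam, w⟫ + β / 2 * ‖w‖ ^ 2 := by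
    have hsq : 0 ≤ (2 * β)⁻¹ * ‖β • w - lam‖ ^ 2 := by positivity
    have hexp : (2 * β)⁻¹ * ‖β • w - lam‖ ^ 2
        = -⟪lam, w⟫ + β / 2 * ‖w‖ ^ 2 + (2 * β)⁻¹ * ‖lam‖ ^ 2 := by
      rw [norm_sub_sq_real, norm_smul, real_inner_smul_left, Real.norm_eq_abs, mul_pow, sq_abs,
        real_inner_comm]
      field_simp
      ring
    linarith
  have hres : 0 ≤ (ρ - β) / 2 * ‖w + z‖ ^ 2 := by
    have := sub_nonneg.2 hβρ; positivity
  linarith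

namespace ADMMStep

variable {X : Set E} {Xb : Set F} {xb xbp : F} {xp : E} {z y zp yp : P}

theorem smul_z_eq (h : ADMMStep A B f g X Xb lam ρ β xb z y xp xbp zp yp) (hρ : ρ ≠ 0)
    (hρβ : ρ + β ≠ 0) : (ρ + β) • zp = -(ρ • (A xp + B xbp) + y + lam) := by
  rw [h.2.2.2.2.1]
  match_scalars <;> field_simp

theorem dual_eq (h : ADMMStep A B f g X Xb lam ρ β xb z y xp xbp zp yp) (hρ : ρ ≠ 0)
    (hρβ : ρ + β ≠ 0) : lam + β • zp + yp = 0 := by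
  rw [h.2.2.2.2.2]
  linear_combination (norm := module) h.smul_z_eq hρ hρβ

theorem smul_residual_eq (h : ADMMStep A B f g X Xb lam ρ β xb z y xp xbp zp yp) (hρ : ρ ≠ 0)
    (hρβ : ρ + β ≠ 0) (hy : lam + β • z + y = 0) :
    ρ • (A xp + B xbp + zp) = -(β • (zp - z)) := by
  have := h.dual_eq hρ hρβ
  rw [h.2.2.2.2.2] at this
  linear_combination (norm := module) this - hy

theorem augLagrangian_add_le (h : ADMMStep A B f g X Xb lam ρ β xb z y xp xbp zp yp)
    (hρ : 0 < ρ) (hβ : 0 ≤ β) (hg : ConvexOn ℝ Xb g) {x : E} (hx : x ∈ X) (hxb : xb ∈ Xb)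
    (hy : lam + β • z + y = 0) :
    augLagrangian A B f g lam ρ β xp xbp zp yp + ρ / 2 * ‖B xbp - B xb‖ ^ 2
        + ((ρ + β) / 2 - β ^ 2 / ρ) * ‖zp - z‖ ^ 2
      ≤ augLagrangian A B f g lam ρ β x xb z y := by
  have hρβ : ρ + β ≠ 0 := by positivity
  have hx_step := augLagrangian_le_of_isMinOn_fst (g := g) (lam := lam) (β := β) hρ.ne' h.2.1 hx
  have hxb_step := augLagrangian_add_le_of_isMinOn_snd (f := f) (lam := lam) (β := β) hρ.ne' hg
    h.2.2.2.1 h.2.2.1 hxb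
  have hz_step := augLagrangian_add_eq_of_smul_eq (f := f) (g := g) (z := z)
    (h.smul_z_eq hρ.ne' hρβ)
  have hy_step : augLagrangian A B f g lam ρ β xp xbp zp yp
      = augLagrangian A B f g lam ρ β xp xbp zp y + β ^ 2 / ρ * ‖zp - z‖ ^ 2 := by
    have hres := congrArg (‖·‖ ^ 2) (h.smul_residual_eq hρ.ne' hρβ hy)
    simp only [norm_neg, norm_smul, Real.norm_eq_abs, mul_pow, sq_abs] at hres
    rw [h.2.2.2.2.2, augLagrangian_dual_update]
    field_simp
    linarith
  rw [norm_sub_rev] at hxb_step hz_step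
  linarith

theorem augLagrangian_add_le_of_eq_two_mul
    (h : ADMMStep A B f g X Xb lam ρ β xb z y xp xbp zp yp) (hβ : 0 < β) (hρ : ρ = 2 * β)
    (hg : ConvexOn ℝ Xb g) {x : E} (hx : x ∈ X) (hxb : xb ∈ Xb) (hy : lam + β • z + y = 0) :
    augLagrangian A B f g lam ρ β xp xbp zp yp + β * ‖B xbp - B xb‖ ^ 2 + β * ‖zp - z‖ ^ 2
      ≤ augLagrangian A B f g lam ρ β x xb z y := by
  have hhalf : ρ / 2 = β := by rw [hρ]; ring
  have hcoef : (ρ + β) / 2 - β ^ 2 / ρ = β := by subst hρ; field_simp; ring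
  simpa only [hhalf, hcoef] using h.augLagrangian_add_le (by rw [hρ]; positivity) hβ.le hg hx hxb hy

theorem residual_eq_of_eq_two_mul (h : ADMMStep A B f g X Xb lam ρ β xb z y xp xbp zp yp)
    (hβ : 0 < β) (hρ : ρ = 2 * β) (hy : lam + β • z + y = 0) :
    A xp + B xbp + zp = (-2⁻¹ : ℝ) • (zp - z) := by
  have hρ0 : ρ ≠ 0 := by rw [hρ]; positivity
  apply smul_right_injective P hρ0
  simp only
  rw [h.smul_residual_eq hρ0 (by rw [hρ]; positivity) hy, hρ]
  module

end ADMMStep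

end

/-- Corollary 1 (asymptotic convergence of the ADMM inner iterations). -/
theorem admm_inner_iterations_convergence
    (A : E →L[ℝ] P) (B : F →L[ℝ] P) (f : E → ℝ) (g : F → ℝ)
    (X : Set E) (Xb : Set F) (lam : P) (ρ β : ℝ)
    (hg : ConvexOn ℝ Set.univ g) (hXb : Convex ℝ Xb)
    (hβ : 0 < β) (hρ : ρ = 2 * β)
    (hf : ∃ mf : ℝ, ∀ x ∈ X, mf ≤ f x) (hgb : ∃ mg : ℝ, ∀ xb ∈ Xb, mg ≤ g xb)
    (x : ℕ → E) (xb : ℕ → F) (z y : ℕ → P)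
    (hxX : ∀ r, x r ∈ X) (hxbXb : ∀ r, xb r ∈ Xb)
    (hy0 : lam + β • z 0 + y 0 = 0)
    (hstep : ∀ r : ℕ, ADMMStep A B f g X Xb lam ρ β
      (xb r) (z r) (y r) (x (r + 1)) (xb (r + 1)) (z (r + 1)) (y (r + 1))) :
    Filter.Tendsto (fun r => B (xb (r + 1)) - B (xb r)) Filter.atTop (nhds 0) ∧
    Filter.Tendsto (fun r => z (r + 1) - z r) Filter.atTop (nhds 0) ∧
    Filter.Tendsto (fun r => A (x r) + B (xb r) + z r) Filter.atTop (nhds 0) := by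
  obtain ⟨mf, hmf⟩ := hf
  obtain ⟨mg, hmg⟩ := hgb
  have hρ0 : 0 < ρ := by linarith
  have hρβ : ρ + β ≠ 0 := by positivity
  have hdual : ∀ r, lam + β • z r + y r = 0 := by
    rintro (_ | r)
    exacts [hy0, (hstep r).dual_eq hρ0.ne' hρβ]
  set L := fun r => augLagrangian A B f g lam ρ β (x r) (xb r) (z r) (y r)
  have hdesc (r : ℕ) := (hstep r).augLagrangian_add_le_of_eq_two_mul hβ hρ
    (hg.subset (Set.subset_univ _) hXb) (hxX r) (hxbXb r) (hdual r)
  have hbdd : BddBelow (Set.range L) := ⟨mf + mg - (2 * β)⁻¹ * ‖lam‖ ^ 2, by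
    rintro _ ⟨r, rfl⟩
    linarith [hmf _ (hxX r), hmg _ (hxbXb r),
      augLagrangian_ge_of_dual_eq (f := f) (g := g) (A := A) (B := B) (x := x r) (xb := xb r)
        hβ (by linarith) (hdual r)]⟩
  have hnonneg : ∀ v : P, 0 ≤ β * ‖v‖ ^ 2 := fun v => by positivity
  have hB := tendsto_nhds_zero_of_add_mul_sq_norm_le (v := fun r => B (xb (r + 1)) - B (xb r))
    hβ hbdd fun r => by linarith [hdesc r, hnonneg (z (r + 1) - z r)]
  have hz := tendsto_nhds_zero_of_add_mul_sq_norm_le (v := fun r => z (r + 1) - z r)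
    hβ hbdd fun r => by linarith [hdesc r, hnonneg (B (xb (r + 1)) - B (xb r))]
  refine ⟨hB, hz, (tendsto_add_atTop_iff_nat 1).1 ?_⟩
  simpa [fun r => (hstep r).residual_eq_of_eq_two_mul hβ hρ (hdual r)]
    using hz.const_smul (-2⁻¹ : ℝ)
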